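/- (Isserlis/Wick formula for four variables) If (N₁, N₂, N₃, N₄) is a centered Gaussian vector, then E[N₁N₂N₃N₄] = E[N₁N₂]E[N₃N₄] + E[N₁N₃]E[N₂N₄] + E[N₁N₄]E[N₂N₃]. -/

import Mathlib

/-!
Since every linear combination `Y = ∑ tᵢ Nᵢ` is a centered Gaussian, `E[Y⁴] = 3 E[Y²]²`. Both sides
are quartic forms in `t`, with coefficients `E[NᵢNⱼNₖNₗ]` on the left and products of covariances
on the right; polarizing at `(e₀, e₁, e₂, e₃)` (a signed sum over `t = (1, ±1, ±1, ±1)`) reads off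
`E[N₀N₁N₂N₃]` on the left and the three pairings of covariances on the right.
-/

open MeasureTheory ProbabilityTheory Finset Real
open scoped NNReal Nat

lemma integral_even_pow_mul_exp_neg_mul_sq {b : ℝ} (hb : 0 < b) (k : ℕ) :
    ∫ x, x ^ (2 * k) * rexp (-b * x ^ 2) = b ^ (-(k + 1 / 2 : ℝ)) * Gamma (k + 1 / 2) := by
  have h := integral_rpow_mul_exp_neg_mul_rpow two_pos
    (by linarith [k.cast_nonneg (α := ℝ)] : (-1 : ℝ) < 2 * k) hb
  have heven : ∀ x : ℝ, x ^ (2 * k) * rexp (-b * x ^ 2)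
      = |x| ^ (2 * k : ℝ) * rexp (-b * |x| ^ (2 : ℝ)) := fun x => by
    rw [← rpow_natCast]
    norm_cast
    simp [pow_mul, sq_abs]
  simp_rw [heven]
  rw [integral_comp_abs (f := fun x => x ^ (2 * k : ℝ) * rexp (-b * x ^ (2 : ℝ))), h]
  ring_nf

lemma integral_even_pow_gaussianReal (v : ℝ≥0) (k : ℕ) :
    ∫ x, x ^ (2 * k) ∂gaussianReal 0 v = v ^ k * (2 * k - 1)‼ := by
  rcases eq_or_ne v 0 with rfl | hv
  · cases k <;> simp [gaussianReal_zero_var]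
  rw [integral_gaussianReal_eq_integral_smul hv]
  simp only [gaussianPDFReal_def, smul_eq_mul, sub_zero, mul_assoc]
  rw [integral_const_mul]
  simp_rw [mul_comm (rexp _), neg_div, div_eq_inv_mul, ← neg_mul]
  rw [integral_even_pow_mul_exp_neg_mul_sq (by positivity), Gamma_nat_add_half,
    inv_rpow (by positivity), rpow_neg (by positivity), inv_inv, rpow_add (by positivity),
    rpow_natCast, ← sqrt_eq_rpow, mul_left_comm 2 π, sqrt_mul pi_pos.le]
  have : 0 < √π := sqrt_pos.2 pi_pos
  have : 0 < √(2 * v) := sqrt_pos.2 (by positivity)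
  field_simp
  ring

lemma ProbabilityTheory.HasLaw.integral_pow_four_eq_three_mul_sq {Ω : Type*}
    {mΩ : MeasurableSpace Ω} {P : Measure Ω} {Y : Ω → ℝ} {v : ℝ≥0}
    (hY : HasLaw Y (gaussianReal 0 v) P) :
    ∫ ω, Y ω ^ 4 ∂P = 3 * (∫ ω, Y ω ^ 2 ∂P) ^ 2 := by
  have h₄ := hY.integral_comp (f := fun x => x ^ (2 * 2)) (by fun_prop)
  have h₂ := hY.integral_comp (f := fun x => x ^ (2 * 1)) (by fun_prop)
  simp only [Function.comp_def, integral_even_pow_gaussianReal] at h₄ h₂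
  rw [h₄, h₂]
  norm_num
  ring

lemma integral_sum_mul_sq {Ω ι : Type*} [Fintype ι] {mΩ : MeasurableSpace Ω} {μ : Measure Ω}
    {X : ι → Ω → ℝ} (hX : ∀ i, MemLp (X i) 2 μ) (t : ι → ℝ) :
    ∫ ω, (∑ i, t i * X i ω) ^ 2 ∂μ = ∑ i, ∑ j, t i * t j * ∫ ω, X i ω * X j ω ∂μ := by
  have hint : ∀ i j, Integrable (fun ω => t i * t j * (X i ω * X j ω)) μ := fun i j =>
    ((hX i).integrable_mul (hX j)).const_mul _
  have hexpand (ω : Ω) :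
      (∑ i, t i * X i ω) ^ 2 = ∑ i, ∑ j, t i * t j * (X i ω * X j ω) := by
    simp_rw [sq, sum_mul_sum]
    congr! 2
    ring
  simp_rw [hexpand, ← integral_const_mul]
  rw [integral_finsetSum _ fun i _ => integrable_finsetSum _ fun j _ => hint i j]
  refine sum_congr rfl fun i _ => ?_
  rw [integral_finsetSum _ fun j _ => hint i j]

/-- For a quartic form `Q t = ∑ m i j k l * t i * t j * t k * t l` with symmetric coefficients
this is `m 0 1 2 3`: the signed sum kills every monomial of even degree in one of `t 1, t 2, t 3`,
and `192 = 8 * 4!` counts the sign patterns and the orderings of `(0, 1, 2, 3)`. -/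
noncomputable def quarticPolarization (Q : (Fin 4 → ℝ) → ℝ) : ℝ :=
  ∑ e₁ ∈ ({1, -1} : Finset ℝ), ∑ e₂ ∈ ({1, -1} : Finset ℝ), ∑ e₃ ∈ ({1, -1} : Finset ℝ),
    e₁ * e₂ * e₃ * Q ![1, e₁, e₂, e₃] / 192

lemma quarticPolarization_sum_mul_pow_four (x : Fin 4 → ℝ) :
    quarticPolarization (fun t => (∑ i, t i * x i) ^ 4) = x 0 * x 1 * x 2 * x 3 := by
  simp only [quarticPolarization, sum_pair (by norm_num : (1 : ℝ) ≠ -1), Fin.sum_univ_four,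
    Matrix.cons_val]
  ring

lemma quarticPolarization_three_mul_sq {c : Fin 4 → Fin 4 → ℝ} (hc : ∀ i j, c i j = c j i) :
    quarticPolarization (fun t => 3 * (∑ i, ∑ j, t i * t j * c i j) ^ 2)
      = c 0 1 * c 2 3 + c 0 2 * c 1 3 + c 0 3 * c 1 2 := by
  simp only [quarticPolarization, sum_pair (by norm_num : (1 : ℝ) ≠ -1), Fin.sum_univ_four,
    Matrix.cons_val, hc 1 0, hc 2 0, hc 2 1, hc 3 0, hc 3 1, hc 3 2]
  ring

lemma integral_quarticPolarization {Ω : Type*} {mΩ : MeasurableSpace Ω} {μ : Measure Ω}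
    {F : (Fin 4 → ℝ) → Ω → ℝ} (hF : ∀ t, Integrable (F t) μ) :
    ∫ ω, quarticPolarization (fun t => F t ω) ∂μ
      = quarticPolarization (fun t => ∫ ω, F t ω ∂μ) := by
  have hterm (e₁ e₂ e₃ : ℝ) :
      Integrable (fun ω => e₁ * e₂ * e₃ * F ![1, e₁, e₂, e₃] ω / 192) μ :=
    ((hF _).const_mul _).div_const _
  simp only [quarticPolarization]
  rw [integral_finsetSum _ fun _ _ => integrable_finsetSum _ fun _ _ =>
    integrable_finsetSum _ fun _ _ => hterm _ _ _]
  simp_rw [integral_finsetSum _ fun _ _ => integrable_finsetSum _ fun _ _ => hterm _ _ _,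
    integral_finsetSum _ fun _ _ => hterm _ _ _, integral_div, integral_const_mul]

theorem stmt1_general {Ω : Type} [MeasureSpace Ω]
    (N : Fin 4 → Ω → ℝ)
    (hgauss : ∀ c : Fin 4 → ℝ, ∃ v : NNReal,
      Measure.map (fun ω => ∑ i, c i * N i ω) (ℙ : Measure Ω) = gaussianReal 0 v) :
    ∫ ω, N 0 ω * N 1 ω * N 2 ω * N 3 ω ∂(ℙ : Measure Ω)
      = (∫ ω, N 0 ω * N 1 ω ∂(ℙ : Measure Ω)) * (∫ ω, N 2 ω * N 3 ω ∂(ℙ : Measure Ω))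
        + (∫ ω, N 0 ω * N 2 ω ∂(ℙ : Measure Ω)) * (∫ ω, N 1 ω * N 3 ω ∂(ℙ : Measure Ω))
        + (∫ ω, N 0 ω * N 3 ω ∂(ℙ : Measure Ω)) * (∫ ω, N 1 ω * N 2 ω ∂(ℙ : Measure Ω)) := by
  have hlaw (t : Fin 4 → ℝ) :
      ∃ v : ℝ≥0, HasLaw (fun ω => ∑ i, t i * N i ω) (gaussianReal 0 v) ℙ :=
    (hgauss t).imp fun v hv =>
      ⟨.of_map_ne_zero (by rw [hv]; exact IsProbabilityMeasure.ne_zero _), hv⟩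
  have hmemLp (t : Fin 4 → ℝ) (p : ℝ≥0) : MemLp (fun ω => ∑ i, t i * N i ω) p ℙ := by
    obtain ⟨v, hv⟩ := hlaw t
    exact hv.hasGaussianLaw.memLp ENNReal.coe_ne_top
  have hN (i : Fin 4) : MemLp (N i) 2 ℙ := by
    simpa [Pi.single_apply] using hmemLp (Pi.single i 1) 2
  have hfourth (t : Fin 4 → ℝ) : Integrable (fun ω => (∑ i, t i * N i ω) ^ 4) ℙ := by
    simpa [(by decide : Even 4).pow_abs] using (hmemLp t 4).integrable_norm_pow four_ne_zero
  calc ∫ ω, N 0 ω * N 1 ω * N 2 ω * N 3 ω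
      = ∫ ω, quarticPolarization (fun t => (∑ i, t i * N i ω) ^ 4) := by
        simp_rw [quarticPolarization_sum_mul_pow_four]
    _ = quarticPolarization (fun t => ∫ ω, (∑ i, t i * N i ω) ^ 4) :=
        integral_quarticPolarization hfourth
    _ = quarticPolarization
          (fun t => 3 * (∑ i, ∑ j, t i * t j * ∫ ω, N i ω * N j ω) ^ 2) := by
        congr 1 with t
        obtain ⟨v, hv⟩ := hlaw t
        rw [hv.integral_pow_four_eq_three_mul_sq, integral_sum_mul_sq hN]
    _ = _ := quarticPolarization_three_mul_sq fun i j => by simp_rw [mul_comm]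

/-- Isserlis/Wick formula for four variables: if `(N₀, N₁, N₂, N₃)` is a centered
Gaussian vector (every linear combination is a centered real Gaussian), then
`E[N₀N₁N₂N₃] = E[N₀N₁]E[N₂N₃] + E[N₀N₂]E[N₁N₃] + E[N₀N₃]E[N₁N₂]`. -/
theorem stmt1 {Ω : Type} [MeasureSpace Ω] [IsProbabilityMeasure (ℙ : Measure Ω)]
    (N : Fin 4 → Ω → ℝ) (hmeas : ∀ i, Measurable (N i))
    (hgauss : ∀ c : Fin 4 → ℝ, ∃ v : NNReal,
      Measure.map (fun ω => ∑ i, c i * N i ω) (ℙ : Measure Ω) = gaussianReal 0 v) :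
    ∫ ω, N 0 ω * N 1 ω * N 2 ω * N 3 ω ∂(ℙ : Measure Ω)
      = (∫ ω, N 0 ω * N 1 ω ∂(ℙ : Measure Ω)) * (∫ ω, N 2 ω * N 3 ω ∂(ℙ : Measure Ω))
        + (∫ ω, N 0 ω * N 2 ω ∂(ℙ : Measure Ω)) * (∫ ω, N 1 ω * N 3 ω ∂(ℙ : Measure Ω))
        + (∫ ω, N 0 ω * N 3 ω ∂(ℙ : Measure Ω)) * (∫ ω, N 1 ω * N 2 ω ∂(ℙ : Measure Ω)) :=
  stmt1_general N hgauss
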